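/- arXiv:2504.01289 — 2 statements merged into one kernel-verified Lean document; each statement's English description precedes it below -/
import Mathlib

section
/- Let H_K be an ℝ^d-valued RKHS on [0,T] with continuous kernel K, let t_1,…,t_n ∈ [0,T], ỹ_1,…,ỹ_n ∈ ℝ^d, and λ > 0, and let L_i(φ) = ∫_0^{t_i} φ(s) ds. Then the functional J(φ) = ∑_{i=1}^n ‖L_i(φ) − ỹ_i‖_2² + λ‖φ‖²_{H_K} has at least one minimizer over H_K, and every minimizer lies in the finite-dimensional subspace spanned by the functions t ↦ ∫_0^{t_i} K(s,t)v ds with 1 ≤ i ≤ n and v ∈ ℝ^d; i.e., any minimizer has the form φ* = ∑_{i=1}^n L_i(Φ(·,v_i)) for some v_1,…,v_n ∈ ℝ^d. -/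
open scoped BigOperators

/-- Integral-form representer theorem. The Tikhonov functional
`J(φ) = ∑ᵢ ‖∫_0^{tᵢ} φ(s) ds − ỹᵢ‖² + λ‖φ‖²` on the vRKHS `H_K` admits a
minimizer, and every minimizer is a finite linear combination
`φ* = ∑ᵢ Ψᵢ(vᵢ)` of the integrated kernel sections
`Ψᵢ(v) = (t ↦ ∫_0^{tᵢ} K(s,t) v ds)`. -/
theorem integral_form_representer
    {d n : ℕ} (T : ℝ) (hT : 0 < T)
    {H : Type*} [NormedAddCommGroup H] [InnerProductSpace ℝ H] [CompleteSpace H]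
    (ι : H →ₗ[ℝ] (ℝ → EuclideanSpace ℝ (Fin d)))
    (hinj : Function.Injective ι)
    (hcont : ∀ φ : H, Continuous (ι φ))
    (K : ℝ → ℝ → Matrix (Fin d) (Fin d) ℝ)
    (hKcont : Continuous fun p : ℝ × ℝ => K p.1 p.2)
    (feat : ℝ → EuclideanSpace ℝ (Fin d) → H)
    (hfeat : ∀ (x' : ℝ) (v : EuclideanSpace ℝ (Fin d)),
      ι (feat x' v) = fun x => WithLp.toLp 2 ((K x x').mulVec v))
    (hrepro : ∀ (φ : H) (x : ℝ) (v : EuclideanSpace ℝ (Fin d)),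
      x ∈ Set.Icc 0 T → inner ℝ φ (feat x v) = (inner ℝ (ι φ x) v : ℝ))
    (ts : Fin n → ℝ) (hts : ∀ i, ts i ∈ Set.Icc 0 T)
    (y : Fin n → EuclideanSpace ℝ (Fin d))
    (lam : ℝ) (hlam : 0 < lam)
    -- Ψ i v ∈ H_K is the integrated kernel section t ↦ ∫_0^{tᵢ} K(s,t) v ds,
    -- linear in v, satisfying the integral reproducing identity
    (Ψ : Fin n → EuclideanSpace ℝ (Fin d) →ₗ[ℝ] H)
    (hΨ : ∀ (i : Fin n) (v : EuclideanSpace ℝ (Fin d)),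
      ι (Ψ i v) = fun t : ℝ =>
        (WithLp.toLp 2 (fun j : Fin d => ∫ s in (0:ℝ)..(ts i), ((K s t).mulVec v) j) :
          EuclideanSpace ℝ (Fin d)))
    (hΨrepro : ∀ (i : Fin n) (φ : H) (v : EuclideanSpace ℝ (Fin d)),
      @inner ℝ (EuclideanSpace ℝ (Fin d)) _
        (WithLp.toLp 2 (fun j : Fin d => ∫ s in (0:ℝ)..(ts i), ι φ s j)) v = inner ℝ φ (Ψ i v))
    (J : H → ℝ)
    (hJ : ∀ φ : H, J φ =
      (∑ i : Fin n, ∑ j : Fin d,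
        ((∫ s in (0:ℝ)..(ts i), ι φ s j) - y i j) ^ 2) + lam * ‖φ‖ ^ 2) :
    (∃ φmin : H, ∀ φ : H, J φmin ≤ J φ) ∧
    (∀ φstar : H, (∀ φ : H, J φstar ≤ J φ) →
      ∃ v : Fin n → EuclideanSpace ℝ (Fin d), φstar = ∑ i : Fin n, Ψ i (v i)) := by
  classical
  -- the finite-dimensional subspace spanned by the Ψ i v
  set e : Fin d → EuclideanSpace ℝ (Fin d) := fun j => EuclideanSpace.single j (1:ℝ) with he
  set A : (Fin n → EuclideanSpace ℝ (Fin d)) →ₗ[ℝ] H :=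
    ∑ i : Fin n, (Ψ i).comp (LinearMap.proj i) with hA
  have hAapp : ∀ v, A v = ∑ i : Fin n, Ψ i (v i) := by
    intro v; simp [hA, LinearMap.sum_apply]
  set S : Submodule ℝ H := LinearMap.range A with hS
  have hmemS : ∀ (i : Fin n) (w : EuclideanSpace ℝ (Fin d)), Ψ i w ∈ S := by
    intro i w
    refine ⟨Pi.single i w, ?_⟩
    rw [hAapp]
    rw [Finset.sum_eq_single i]
    · simp
    · intro b _ hb; simp [Pi.single_apply, hb]
    · simp
  haveI : FiniteDimensional ℝ S := by
    rw [hS]; infer_instance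
  set P : H → H := fun φ => (Submodule.orthogonalProjectionOnto S φ : H) with hP
  -- key: the integrals are inner products against Ψ i (e j)
  have key : ∀ (i : Fin n) (φ : H) (j : Fin d),
      (∫ s in (0:ℝ)..(ts i), ι φ s j) = inner ℝ φ (Ψ i (e j)) := by
    intro i φ j
    rw [← hΨrepro i φ (e j)]
    rw [he]
    rw [show (WithLp.toLp 2 (fun j : Fin d => ∫ s in (0:ℝ)..(ts i), ι φ s j) : EuclideanSpace ℝ (Fin d))
        = (WithLp.equiv 2 _).symm (fun j : Fin d => ∫ s in (0:ℝ)..(ts i), ι φ s j) from rfl]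
    rw [EuclideanSpace.inner_single_right]
    simp
  set g : H → ℝ := fun φ => ∑ i : Fin n, ∑ j : Fin d,
      ((inner ℝ φ (Ψ i (e j)) : ℝ) - y i j) ^ 2 with hg
  have hJ' : ∀ φ, J φ = g φ + lam * ‖φ‖ ^ 2 := by
    intro φ; rw [hJ, hg]
    congr 1
    refine Finset.sum_congr rfl fun i _ => Finset.sum_congr rfl fun j _ => ?_
    rw [key]
  have hgnonneg : ∀ φ, 0 ≤ g φ :=
    fun φ => Finset.sum_nonneg fun i _ => Finset.sum_nonneg fun j _ => sq_nonneg _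
  -- decomposition of J
  have hinner_eq : ∀ (φ : H) (i : Fin n) (j : Fin d),
      (inner ℝ φ (Ψ i (e j)) : ℝ) = inner ℝ (P φ) (Ψ i (e j)) := by
    intro φ i j
    have horth : φ - P φ ∈ Sᗮ := Submodule.sub_starProjection_mem_orthogonal φ
    have h0 : (inner ℝ (φ - P φ) (Ψ i (e j)) : ℝ) = 0 := by
      rw [real_inner_comm]
      exact (Submodule.mem_orthogonal S _).mp horth _ (hmemS i (e j))
    have := inner_sub_left (𝕜 := ℝ) φ (P φ) (Ψ i (e j))
    rw [h0] at this
    linarith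
  have hgproj : ∀ φ, g φ = g (P φ) := by
    intro φ; rw [hg]
    refine Finset.sum_congr rfl fun i _ => Finset.sum_congr rfl fun j _ => ?_
    rw [hinner_eq]
  have hnorm : ∀ φ : H, ‖φ‖ ^ 2 = ‖P φ‖ ^ 2 + ‖φ - P φ‖ ^ 2 := by
    intro φ
    have h0 : (inner ℝ (P φ) (φ - P φ) : ℝ) = 0 :=
      (Submodule.mem_orthogonal S _).mp (Submodule.sub_starProjection_mem_orthogonal φ) _
        (Submodule.orthogonalProjectionOnto S φ).2
    have := norm_add_sq_real (P φ) (φ - P φ)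
    rw [h0] at this
    simpa using this
  have hdecomp : ∀ φ : H, J φ = J (P φ) + lam * ‖φ - P φ‖ ^ 2 := by
    intro φ
    rw [hJ', hJ', hgproj φ, hnorm φ]
    ring
  -- continuity and coercivity on S
  have hgcont : Continuous g := by
    rw [hg]
    refine continuous_finset_sum _ fun i _ => continuous_finset_sum _ fun j _ => ?_
    exact ((continuous_id.inner continuous_const).sub continuous_const).pow 2
  have hJcont : Continuous J := by
    have : Continuous fun φ : H => g φ + lam * ‖φ‖ ^ 2 :=
      hgcont.add (continuous_const.mul ((continuous_norm).pow 2))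
    exact this.congr fun φ => (hJ' φ).symm
  have hJS_cont : Continuous fun p : S => J (p : H) := hJcont.comp continuous_subtype_val
  have hcoercive : Filter.Tendsto (fun p : S => J (p : H)) (Filter.cocompact S) Filter.atTop := by
    have h1 : Filter.Tendsto (fun p : S => ‖p‖) (Filter.cocompact S) Filter.atTop :=
      tendsto_norm_cocompact_atTop
    have h2 : Filter.Tendsto (fun p : S => lam * ‖p‖ ^ 2) (Filter.cocompact S) Filter.atTop := by
      have hsq : Filter.Tendsto (fun r : ℝ => lam * r ^ 2) Filter.atTop Filter.atTop :=
        (Filter.tendsto_pow_atTop two_ne_zero).const_mul_atTop hlam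
      exact hsq.comp h1
    refine Filter.tendsto_atTop_mono (fun p => ?_) h2
    rw [hJ']
    have : ‖(p : H)‖ = ‖p‖ := rfl
    rw [this]
    linarith [hgnonneg (p : H)]
  obtain ⟨p₀, hp₀⟩ := hJS_cont.exists_forall_le hcoercive
  have hPmem : ∀ φ : H, P φ ∈ S := fun φ => (Submodule.orthogonalProjectionOnto S φ).2
  have hPfix : ∀ p : S, P (p : H) = p := by
    intro p
    rw [hP]
    simp [Submodule.orthogonalProjectionOnto_mem_subspace_eq_self]
  have hmin : ∀ φ : H, J (p₀ : H) ≤ J φ := by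
    intro φ
    have h1 : J ((⟨P φ, hPmem φ⟩ : S) : H) ≤ J φ := by
      have := hdecomp φ
      have h2 : 0 ≤ lam * ‖φ - P φ‖ ^ 2 := mul_nonneg hlam.le (sq_nonneg _)
      simpa using by linarith
    exact le_trans (hp₀ ⟨P φ, hPmem φ⟩) h1
  refine ⟨⟨(p₀ : H), hmin⟩, ?_⟩
  intro φstar hstar
  have h1 : J (P φstar) ≤ J φstar := by
    have := hdecomp φstar
    have h2 : 0 ≤ lam * ‖φstar - P φstar‖ ^ 2 := mul_nonneg hlam.le (sq_nonneg _)
    linarith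
  have h2 : J φstar ≤ J (P φstar) := hstar _
  have h3 : lam * ‖φstar - P φstar‖ ^ 2 = 0 := by
    have := hdecomp φstar; linarith
  have h4 : φstar - P φstar = 0 := by
    have : ‖φstar - P φstar‖ ^ 2 = 0 := by
      rcases mul_eq_zero.mp h3 with h | h
      · exact absurd h hlam.ne'
      · exact h
    simpa [pow_eq_zero_iff] using this
  have h5 : φstar = P φstar := by rw [sub_eq_zero] at h4; exact h4
  have h6 : φstar ∈ S := h5 ▸ hPmem φstar
  obtain ⟨v, hv⟩ := h6
  exact ⟨v, by rw [← hv, hAapp]⟩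
end

section
/- Let H_K be an ℝ^d-valued RKHS on [0,T] with continuous kernel K, M a closed finite-dimensional subspace of H_K containing all functions L_i(Φ(·,v)) = (t ↦ ∫_0^{t_i} K(s,t)v ds) for i = 1,…,n and v ∈ ℝ^d, and P_M the orthogonal projection onto M. Then for each i and each φ ∈ H_K, ‖L_i(φ) − ỹ_i‖_2² = ‖L_i(P_M φ) − ỹ_i‖_2², where L_i(φ) = ∫_0^{t_i} φ(s) ds. -/
/-- Invariance of the data-fidelity term under projection: if `M` is
a finite-dimensional subspace of the vRKHS containing all integrated kernel
sections `Ψᵢ(v)`, then `‖Lᵢ(φ) − ỹᵢ‖² = ‖Lᵢ(P_M φ) − ỹᵢ‖²` for every `φ`,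
where `Lᵢ(φ) = ∫_0^{tᵢ} φ(s) ds`. -/
theorem fidelity_invariant_under_projection
    {d n : ℕ} (T : ℝ) (hT : 0 < T)
    {H : Type*} [NormedAddCommGroup H] [InnerProductSpace ℝ H] [CompleteSpace H]
    (ι : H →ₗ[ℝ] (ℝ → EuclideanSpace ℝ (Fin d)))
    (hinj : Function.Injective ι)
    (hcont : ∀ φ : H, Continuous (ι φ))
    (K : ℝ → ℝ → Matrix (Fin d) (Fin d) ℝ)
    (hKcont : Continuous fun p : ℝ × ℝ => K p.1 p.2)
    (ts : Fin n → ℝ) (hts : ∀ i, ts i ∈ Set.Icc 0 T)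
    (y : Fin n → EuclideanSpace ℝ (Fin d))
    (Ψ : Fin n → EuclideanSpace ℝ (Fin d) →ₗ[ℝ] H)
    (hΨ : ∀ (i : Fin n) (v : EuclideanSpace ℝ (Fin d)),
      ι (Ψ i v) = fun t : ℝ =>
        (WithLp.toLp 2 (fun j : Fin d => ∫ s in (0:ℝ)..(ts i), ((K s t).mulVec v) j) :
          EuclideanSpace ℝ (Fin d)))
    (hΨrepro : ∀ (i : Fin n) (φ : H) (v : EuclideanSpace ℝ (Fin d)),
      @inner ℝ (EuclideanSpace ℝ (Fin d)) _
        (WithLp.toLp 2 (fun j : Fin d => ∫ s in (0:ℝ)..(ts i), ι φ s j)) v = inner ℝ φ (Ψ i v))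
    (M : Submodule ℝ H) [FiniteDimensional ℝ M]
    (hM : ∀ (i : Fin n) (v : EuclideanSpace ℝ (Fin d)), Ψ i v ∈ M)
    (i : Fin n) (φ : H) :
    ∑ j : Fin d, ((∫ s in (0:ℝ)..(ts i), ι φ s j) - y i j) ^ 2 =
    ∑ j : Fin d,
      ((∫ s in (0:ℝ)..(ts i), ι ((M.orthogonalProjection φ : H)) s j) - y i j) ^ 2 := by
  set ψ : H := (M.orthogonalProjection φ : H) with hψ
  have key : (WithLp.toLp 2 (fun j : Fin d => ∫ s in (0:ℝ)..(ts i), ι φ s j) : EuclideanSpace ℝ (Fin d))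
      = WithLp.toLp 2 (fun j : Fin d => ∫ s in (0:ℝ)..(ts i), ι ψ s j) := by
    refine ext_inner_right (𝕜 := ℝ) (E := EuclideanSpace ℝ (Fin d)) fun v => ?_
    show @inner ℝ (EuclideanSpace ℝ (Fin d)) _
        (WithLp.toLp 2 (fun j : Fin d => ∫ s in (0:ℝ)..(ts i), ι φ s j)) v
      = @inner ℝ (EuclideanSpace ℝ (Fin d)) _
        (WithLp.toLp 2 (fun j : Fin d => ∫ s in (0:ℝ)..(ts i), ι ψ s j)) v
    rw [hΨrepro i φ v, hΨrepro i ψ v]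
    have horth : φ - ψ ∈ Mᗮ := M.sub_starProjection_mem_orthogonal φ
    have h0 : inner ℝ (φ - ψ) (Ψ i v) = (0:ℝ) :=
      (Submodule.mem_orthogonal' M _).mp horth _ (hM i v)
    have := inner_sub_left (𝕜 := ℝ) φ ψ (Ψ i v)
    rw [h0] at this
    linarith [this]
  exact Finset.sum_congr rfl fun j _ => by rw [show (∫ s in (0:ℝ)..(ts i), ι φ s j) = ∫ s in (0:ℝ)..(ts i), ι ψ s j from congrFun (congrArg WithLp.ofLp key) j]
end
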